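/- For every bipartite pure state |Ψ_RA⟩ on H_R⊗H_A, the advantage-preserving ineliminable correlations equal the entropy of entanglement: Ξ_A(Ψ_RA) = S(ρ_R), where ρ_R := Tr_A[Ψ_RA]. -/

import Mathlib

open Matrix BigOperators
open scoped Kronecker ComplexOrder

noncomputable section

variable {α β γ : Type*}

/-- Partial trace over the second tensor factor. -/
def ptrace2 [Fintype β] (ρ : Matrix (α × β) (α × β) ℂ) : Matrix α α ℂ :=
  Matrix.of fun i j => ∑ k, ρ (i, k) (j, k)

/-- Partial trace over the first tensor factor. -/
def ptrace1 [Fintype α] (ρ : Matrix (α × β) (α × β) ℂ) : Matrix β β ℂ :=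
  Matrix.of fun i j => ∑ k, ρ (k, i) (k, j)

open scoped Classical in
/-- von Neumann entropy, in bits (base-2 logarithm), via the eigenvalues of a
Hermitian matrix (with the convention `0 * log 0 = 0`). -/
def vnEntropy [Fintype α] [DecidableEq α] (ρ : Matrix α α ℂ) : ℝ :=
  if h : ρ.IsHermitian then -∑ i, (h.eigenvalues i) * Real.logb 2 (h.eigenvalues i) else 0

/-- Quantum mutual information `I^{X:Y} = S(X) + S(Y) - S(XY)` of a bipartite state. -/
def mutInfo [Fintype α] [DecidableEq α] [Fintype β] [DecidableEq β]
    (ρ : Matrix (α × β) (α × β) ℂ) : ℝ :=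
  vnEntropy (ptrace2 ρ) + vnEntropy (ptrace1 ρ) - vnEntropy ρ

/-- Coherent information `I_c^{A→R} = S(R) - S(RA)` of a bipartite state on `R × A`. -/
def cohInfo [Fintype α] [DecidableEq α] [Fintype β] [DecidableEq β]
    (ρ : Matrix (α × β) (α × β) ℂ) : ℝ :=
  vnEntropy (ptrace2 ρ) - vnEntropy ρ

/-- Marginal on `R, B` of a tripartite state on `R × (B × E)`. -/
def mRB [Fintype γ] (ς : Matrix (α × (β × γ)) (α × (β × γ)) ℂ) : Matrix (α × β) (α × β) ℂ :=
  Matrix.of fun x y => ∑ m, ς (x.1, (x.2, m)) (y.1, (y.2, m))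

/-- Marginal on `R, E` of a tripartite state on `R × (B × E)`. -/
def mRE [Fintype β] (ς : Matrix (α × (β × γ)) (α × (β × γ)) ℂ) : Matrix (α × γ) (α × γ) ℂ :=
  Matrix.of fun x y => ∑ m, ς (x.1, (m, x.2)) (y.1, (m, y.2))

/-- A state is a positive semidefinite matrix of unit trace. -/
def IsState [Fintype α] (ρ : Matrix α α ℂ) : Prop := ρ.PosSemidef ∧ ρ.trace = 1

/-- The ε-ineliminable correlations `Ξ_A(ρ_{RA}; ε)`: the least value of `I^{R:B}` of the
output state `ς_{RBE} = (1⊗V) ρ (1⊗V)†`, over all isometries `V : H_A → H_B ⊗ H_E`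
(into arbitrary finite-dimensional spaces) satisfying `I^{R:E}(ς) ≤ ε` and
`I^{R:E}(ς) ≤ I^{R:B}(ς)`. -/
def Xi {dR dA : Type*} [Fintype dR] [DecidableEq dR] [Fintype dA] [DecidableEq dA]
    (ρ : Matrix (dR × dA) (dR × dA) ℂ) (ε : ℝ) : ℝ :=
  sInf { x : ℝ | ∃ (b e : ℕ) (V : Matrix (Fin b × Fin e) dA ℂ), Vᴴ * V = 1 ∧
    mutInfo (mRE (((1 : Matrix dR dR ℂ) ⊗ₖ V) * ρ * ((1 : Matrix dR dR ℂ) ⊗ₖ V)ᴴ)) ≤ ε ∧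
    mutInfo (mRE (((1 : Matrix dR dR ℂ) ⊗ₖ V) * ρ * ((1 : Matrix dR dR ℂ) ⊗ₖ V)ᴴ)) ≤
      mutInfo (mRB (((1 : Matrix dR dR ℂ) ⊗ₖ V) * ρ * ((1 : Matrix dR dR ℂ) ⊗ₖ V)ᴴ)) ∧
    x = mutInfo (mRB (((1 : Matrix dR dR ℂ) ⊗ₖ V) * ρ * ((1 : Matrix dR dR ℂ) ⊗ₖ V)ᴴ)) }

/-- The advantage-preserving ineliminable correlations `Ξ_A(ρ_{RA})` (privacy
parameter `ε = ∞`): only the constraint `I^{R:E}(ς) ≤ I^{R:B}(ς)` is imposed. -/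
def XiAP {dR dA : Type*} [Fintype dR] [DecidableEq dR] [Fintype dA] [DecidableEq dA]
    (ρ : Matrix (dR × dA) (dR × dA) ℂ) : ℝ :=
  sInf { x : ℝ | ∃ (b e : ℕ) (V : Matrix (Fin b × Fin e) dA ℂ), Vᴴ * V = 1 ∧
    mutInfo (mRE (((1 : Matrix dR dR ℂ) ⊗ₖ V) * ρ * ((1 : Matrix dR dR ℂ) ⊗ₖ V)ᴴ)) ≤
      mutInfo (mRB (((1 : Matrix dR dR ℂ) ⊗ₖ V) * ρ * ((1 : Matrix dR dR ℂ) ⊗ₖ V)ᴴ)) ∧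
    x = mutInfo (mRB (((1 : Matrix dR dR ℂ) ⊗ₖ V) * ρ * ((1 : Matrix dR dR ℂ) ⊗ₖ V)ᴴ)) }

end

/-!
For a pure state `φ` on `R ⊗ B ⊗ E`, complementary marginals are `M Mᴴ` and `(Mᴴ M)ᵀ` for a
reshaping `M` of `φ`, so they have the same nonzero spectrum: `S(RB) = S(E)` and `S(RE) = S(B)`.
An isometry on `A` leaves `ρ_R` unchanged, hence `I(R:B) + I(R:E) = 2 S(R)` for every `V`, and the
constraint `I(R:E) ≤ I(R:B)` forces `I(R:B) ≥ S(R)`. The copy isometry `|a⟩ ↦ |a⟩|a⟩` makes `B`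
and `E` interchangeable, so `I(R:B) = I(R:E) = S(R)` is attained.
-/

section Spectrum

open Polynomial

variable {α β : Type*} [Fintype α] [DecidableEq α] [Fintype β] [DecidableEq β]

lemma Matrix.IsHermitian.sum_map_roots_X_pow_mul_charpoly {A : Matrix α α ℂ} (hA : A.IsHermitian)
    (k : ℕ) {f : ℝ → ℝ} (hf : f 0 = 0) :
    ((X ^ k * A.charpoly).roots.map fun z : ℂ => f z.re).sum = ∑ i, f (hA.eigenvalues i) := by
  rw [roots_mul (mul_ne_zero (pow_ne_zero _ X_ne_zero) A.charpoly_monic.ne_zero), roots_X_pow,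
    hA.roots_charpoly_eq_eigenvalues]
  simp [Multiset.nsmul_singleton, hf]

lemma Matrix.IsHermitian.sum_eigenvalues_eq_of_charpoly {A : Matrix α α ℂ} {B : Matrix β β ℂ}
    (hA : A.IsHermitian) (hB : B.IsHermitian)
    (h : X ^ Fintype.card β * A.charpoly = X ^ Fintype.card α * B.charpoly)
    {f : ℝ → ℝ} (hf : f 0 = 0) :
    ∑ i, f (hA.eigenvalues i) = ∑ j, f (hB.eigenvalues j) := by
  rw [← hA.sum_map_roots_X_pow_mul_charpoly _ hf, h, hB.sum_map_roots_X_pow_mul_charpoly _ hf]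

lemma vnEntropy_eq_of_charpoly {A : Matrix α α ℂ} {B : Matrix β β ℂ}
    (hA : A.IsHermitian) (hB : B.IsHermitian)
    (h : X ^ Fintype.card β * A.charpoly = X ^ Fintype.card α * B.charpoly) :
    vnEntropy A = vnEntropy B := by
  rw [vnEntropy, vnEntropy, dif_pos hA, dif_pos hB,
    hA.sum_eigenvalues_eq_of_charpoly hB h (f := fun x => x * Real.logb 2 x) (zero_mul _)]

lemma vnEntropy_mul_conjTranspose_eq_transpose (M : Matrix α β ℂ) :
    vnEntropy (M * Mᴴ) = vnEntropy (Mᵀ * Mᵀᴴ) := by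
  have hT : Mᵀ * Mᵀᴴ = (Mᴴ * M)ᵀ := by
    rw [transpose_mul]; rfl
  rw [hT]
  refine vnEntropy_eq_of_charpoly (isHermitian_mul_conjTranspose_self M)
    (isHermitian_conjTranspose_mul_self M).transpose ?_
  rw [charpoly_transpose, charpoly_mul_comm']

end Spectrum

section Marginals

variable {α β γ κ : Type*}

lemma ptrace2_vecMulVec [Fintype β] (φ : α × β → ℂ) :
    ptrace2 (vecMulVec φ (star φ)) = of (Function.curry φ) * (of (Function.curry φ))ᴴ := by
  ext a a'
  simp [ptrace2, vecMulVec_apply, mul_apply]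

lemma ptrace1_vecMulVec [Fintype α] (φ : α × β → ℂ) :
    ptrace1 (vecMulVec φ (star φ)) = (of (Function.curry φ))ᵀ * (of (Function.curry φ))ᵀᴴ := by
  ext b b'
  simp [ptrace1, vecMulVec_apply, mul_apply]

lemma mRE_eq_mRB_submatrix [Fintype β] (ς : Matrix (α × (β × γ)) (α × (β × γ)) ℂ) :
    mRE ς = mRB (ς.submatrix (Prod.map id Prod.swap) (Prod.map id Prod.swap)) :=
  rfl

lemma mRB_vecMulVec [Fintype γ] (φ : α × (β × γ) → ℂ) :
    mRB (vecMulVec φ (star φ)) =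
      ptrace2 (vecMulVec (φ ∘ Equiv.prodAssoc α β γ) (star (φ ∘ Equiv.prodAssoc α β γ))) :=
  rfl

lemma ptrace1_mRE_vecMulVec [Fintype α] [Fintype β] (φ : α × (β × γ) → ℂ) :
    ptrace1 (mRE (vecMulVec φ (star φ))) =
      ptrace1 (vecMulVec (φ ∘ Equiv.prodAssoc α β γ) (star (φ ∘ Equiv.prodAssoc α β γ))) := by
  ext c c'
  simp [ptrace1, mRE, vecMulVec_apply, Fintype.sum_prod_type]

lemma ptrace2_mRB [Fintype β] [Fintype γ] (ς : Matrix (α × (β × γ)) (α × (β × γ)) ℂ) :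
    ptrace2 (mRB ς) = ptrace2 ς := by
  ext a a'
  simp [ptrace2, mRB, Fintype.sum_prod_type]

lemma ptrace2_mRE [Fintype β] [Fintype γ] (ς : Matrix (α × (β × γ)) (α × (β × γ)) ℂ) :
    ptrace2 (mRE ς) = ptrace2 ς := by
  ext a a'
  simp only [ptrace2, mRE, of_apply, Fintype.sum_prod_type]
  exact Finset.sum_comm

lemma ptrace2_one_kronecker_conj [Fintype α] [DecidableEq α] [Fintype β] [DecidableEq β] [Fintype κ]
    (V : Matrix κ β ℂ) (hV : Vᴴ * V = 1) (ρ : Matrix (α × β) (α × β) ℂ) :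
    ptrace2 (((1 : Matrix α α ℂ) ⊗ₖ V) * ρ * ((1 : Matrix α α ℂ) ⊗ₖ V)ᴴ) = ptrace2 ρ := by
  ext a a'
  have hblock : (((1 : Matrix α α ℂ) ⊗ₖ V) * ρ * ((1 : Matrix α α ℂ) ⊗ₖ V)ᴴ).submatrix
      (Prod.mk a) (Prod.mk a') = V * ρ.submatrix (Prod.mk a) (Prod.mk a') * Vᴴ := by
    ext p q
    simp [mul_apply, kroneckerMap_apply, one_apply, Fintype.sum_prod_type,
      apply_ite (starRingEnd ℂ), mul_ite]
  calc ptrace2 (((1 : Matrix α α ℂ) ⊗ₖ V) * ρ * ((1 : Matrix α α ℂ) ⊗ₖ V)ᴴ) a a'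
      = trace ((((1 : Matrix α α ℂ) ⊗ₖ V) * ρ * ((1 : Matrix α α ℂ) ⊗ₖ V)ᴴ).submatrix
          (Prod.mk a) (Prod.mk a')) := rfl
    _ = trace (ρ.submatrix (Prod.mk a) (Prod.mk a')) := by
      rw [hblock, trace_mul_cycle, hV, one_mul]
    _ = ptrace2 ρ a a' := rfl

lemma mRB_one_kronecker_conj_eq_mRE [Fintype α] [DecidableEq α] [Fintype β] [Fintype κ]
    (V : Matrix (κ × κ) β ℂ) (hV : V.submatrix Prod.swap id = V) (ρ : Matrix (α × β) (α × β) ℂ) :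
    mRB (((1 : Matrix α α ℂ) ⊗ₖ V) * ρ * ((1 : Matrix α α ℂ) ⊗ₖ V)ᴴ) =
      mRE (((1 : Matrix α α ℂ) ⊗ₖ V) * ρ * ((1 : Matrix α α ℂ) ⊗ₖ V)ᴴ) := by
  conv_lhs => rw [← hV]
  rfl

end Marginals

section PureStates

variable {α β γ κ ι : Type*} [Fintype α] [DecidableEq α] [Fintype β] [DecidableEq β]
  [Fintype γ] [DecidableEq γ]

lemma vnEntropy_ptrace2_vecMulVec_eq_ptrace1 (φ : α × β → ℂ) :
    vnEntropy (ptrace2 (vecMulVec φ (star φ))) = vnEntropy (ptrace1 (vecMulVec φ (star φ))) := by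
  rw [ptrace2_vecMulVec, ptrace1_vecMulVec]
  exact vnEntropy_mul_conjTranspose_eq_transpose _

lemma vnEntropy_mRB_vecMulVec (φ : α × (β × γ) → ℂ) :
    vnEntropy (mRB (vecMulVec φ (star φ))) = vnEntropy (ptrace1 (mRE (vecMulVec φ (star φ)))) := by
  rw [mRB_vecMulVec, ptrace1_mRE_vecMulVec]
  exact vnEntropy_ptrace2_vecMulVec_eq_ptrace1 _

lemma vnEntropy_mRE_vecMulVec (φ : α × (β × γ) → ℂ) :
    vnEntropy (mRE (vecMulVec φ (star φ))) = vnEntropy (ptrace1 (mRB (vecMulVec φ (star φ)))) :=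
  vnEntropy_mRB_vecMulVec (φ ∘ Prod.map id Prod.swap)

lemma mutInfo_mRB_add_mutInfo_mRE_vecMulVec (φ : α × (β × γ) → ℂ) :
    mutInfo (mRB (vecMulVec φ (star φ))) + mutInfo (mRE (vecMulVec φ (star φ))) =
      2 * vnEntropy (ptrace2 (vecMulVec φ (star φ))) := by
  rw [mutInfo, mutInfo, ptrace2_mRB, ptrace2_mRE, vnEntropy_mRB_vecMulVec,
    vnEntropy_mRE_vecMulVec]
  ring

lemma conj_vecMulVec_star {m n : Type*} [Fintype n] (A : Matrix m n ℂ) (v : n → ℂ) :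
    A * vecMulVec v (star v) * Aᴴ = vecMulVec (A *ᵥ v) (star (A *ᵥ v)) := by
  rw [mul_vecMulVec, vecMulVec_mul, star_mulVec]

lemma mutInfo_mRB_add_mutInfo_mRE_of_isometry [Fintype κ] [DecidableEq κ] [Fintype ι]
    [DecidableEq ι] (ψ : α × β → ℂ) (V : Matrix (κ × ι) β ℂ) (hV : Vᴴ * V = 1) :
    mutInfo (mRB (((1 : Matrix α α ℂ) ⊗ₖ V) * vecMulVec ψ (star ψ) * ((1 : Matrix α α ℂ) ⊗ₖ V)ᴴ)) +
        mutInfo (mRE (((1 : Matrix α α ℂ) ⊗ₖ V) * vecMulVec ψ (star ψ) *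
          ((1 : Matrix α α ℂ) ⊗ₖ V)ᴴ)) =
      2 * vnEntropy (ptrace2 (vecMulVec ψ (star ψ))) := by
  have h := mutInfo_mRB_add_mutInfo_mRE_vecMulVec (((1 : Matrix α α ℂ) ⊗ₖ V) *ᵥ ψ)
  rwa [← conj_vecMulVec_star, ptrace2_one_kronecker_conj V hV] at h

end PureStates

/-- The isometry `|b⟩ ↦ |e b⟩ ⊗ |e b⟩`, whose output is symmetric in its two factors. -/
def copyIsometry {β κ : Type*} [DecidableEq κ] (e : β ↪ κ) : Matrix (κ × κ) β ℂ :=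
  of fun p b => if p = (e b, e b) then 1 else 0

lemma copyIsometry_conjTranspose_mul_self {β κ : Type*} [DecidableEq β] [Fintype κ]
    [DecidableEq κ] (e : β ↪ κ) : (copyIsometry e)ᴴ * copyIsometry e = 1 := by
  ext b b'
  simp [copyIsometry, mul_apply, one_apply, apply_ite (star : ℂ → ℂ), eq_comm]

lemma copyIsometry_submatrix_swap {β κ : Type*} [DecidableEq κ] (e : β ↪ κ) :
    (copyIsometry e).submatrix Prod.swap id = copyIsometry e := by
  ext p b
  simp [copyIsometry, Prod.swap_eq_iff_eq_swap]

theorem xiAP_pure_state_eq_entropy_of_entanglement_general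
    {dR dA : Type*} [Fintype dR] [DecidableEq dR] [Fintype dA] [DecidableEq dA]
    (ψ : dR × dA → ℂ) :
    XiAP (Matrix.vecMulVec ψ (star ψ))
      = vnEntropy (ptrace2 (Matrix.vecMulVec ψ (star ψ))) := by
  refine IsLeast.csInf_eq ⟨?_, ?_⟩
  · set V := copyIsometry (Fintype.equivFin dA).toEmbedding
    have hV : Vᴴ * V = 1 := copyIsometry_conjTranspose_mul_self _
    have hBE := mRB_one_kronecker_conj_eq_mRE V (copyIsometry_submatrix_swap _)
      (vecMulVec ψ (star ψ))
    have hsum := mutInfo_mRB_add_mutInfo_mRE_of_isometry ψ V hV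
    refine ⟨_, _, V, hV, by rw [hBE], ?_⟩
    rw [← hBE] at hsum
    linarith
  · rintro x ⟨b, e, V, hV, hEB, rfl⟩
    linarith [mutInfo_mRB_add_mutInfo_mRE_of_isometry ψ V hV]

/-- For every bipartite pure state `|Ψ_RA⟩`, the advantage-preserving
ineliminable correlations equal the entropy of entanglement: `Ξ_A(Ψ) = S(ρ_R)`. -/
theorem xiAP_pure_state_eq_entropy_of_entanglement
    {dR dA : Type*} [Fintype dR] [DecidableEq dR] [Fintype dA] [DecidableEq dA]
    (ψ : dR × dA → ℂ) (hψ : ∑ i, Complex.normSq (ψ i) = 1) :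
    XiAP (Matrix.vecMulVec ψ (star ψ))
      = vnEntropy (ptrace2 (Matrix.vecMulVec ψ (star ψ))) :=
  xiAP_pure_state_eq_entropy_of_entanglement_general ψ
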